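/- For all real numbers v ≥ 1 and K ≥ e, the integral ∫₀¹ √(v · ln(K/ε)) dε is at most 2·√(v · ln K). -/

import Mathlib

/-!
Since `K ≥ e`, i.e. `log K ≥ 1`, the bound `log (1/ε) ≤ 1/ε - 1 ≤ (1/ε - 1) log K` gives
`log (K/ε) ≤ log K / ε` on `(0, 1]`, so `√(log (K/ε)) ≤ √(log K) · ε^(-1/2)`, whose integral
over `[0, 1]` is `2 √(log K)`. The factor `√v` comes out of both sides for every real `v`,
as `√(v y) = √v √y` whenever `y ≥ 0`.
-/

open MeasureTheory Real Set

namespace Real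

theorem log_div_le_log_div_of_one_le_log {K x : ℝ} (hK : 1 ≤ log K) (hx₀ : 0 < x)
    (hx₁ : x ≤ 1) : log (K / x) ≤ log K / x := by
  have hK₀ : K ≠ 0 := by
    rintro rfl
    norm_num at hK
  have h_inv : log x⁻¹ ≤ x⁻¹ - 1 := log_le_sub_one_of_pos (inv_pos.2 hx₀)
  rw [log_inv] at h_inv
  have h_xlog : -log x * x ≤ 1 - x := by
    have := mul_le_mul_of_nonneg_right h_inv hx₀.le
    rwa [sub_mul, inv_mul_cancel₀ hx₀.ne', one_mul] at this
  rw [log_div hK₀ hx₀.ne', le_div_iff₀ hx₀]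
  nlinarith [mul_nonneg (sub_nonneg.2 hx₁) (sub_nonneg.2 hK)]

theorem log_div_nonneg_of_mem_Icc {K x : ℝ} (hK : 1 ≤ K) (hx : x ∈ Icc (0 : ℝ) 1) :
    0 ≤ log (K / x) := by
  rcases hx.1.eq_or_lt with rfl | hx₀
  · simp
  · exact log_nonneg ((one_le_div hx₀).2 (hx.2.trans hK))

theorem sqrt_log_div_le_mul_rpow {K x : ℝ} (hK : 1 ≤ log K) (hx₀ : 0 < x) (hx₁ : x ≤ 1) :
    √(log (K / x)) ≤ √(log K) * x ^ (-(1 / 2) : ℝ) := by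
  calc √(log (K / x)) ≤ √(log K / x) :=
        sqrt_le_sqrt (log_div_le_log_div_of_one_le_log hK hx₀ hx₁)
    _ = √(log K) * x ^ (-(1 / 2) : ℝ) := by
      rw [sqrt_div' _ hx₀.le, rpow_neg hx₀.le, ← sqrt_eq_rpow, div_eq_mul_inv]

end Real

theorem integral_rpow_neg_half_zero_one : ∫ x in (0 : ℝ)..1, x ^ (-(1 / 2) : ℝ) = 2 := by
  rw [integral_rpow (Or.inl (by norm_num)), zero_rpow (by norm_num), one_rpow]
  norm_num

theorem integral_sqrt_log_div_le {K : ℝ} (hK : 1 ≤ log K) :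
    ∫ x in (0 : ℝ)..1, √(log (K / x)) ≤ 2 * √(log K) := by
  have h_bound :
      ∀ x ∈ Ioc (0 : ℝ) 1, √(log (K / x)) ≤ √(log K) * x ^ (-(1 / 2) : ℝ) :=
    fun x hx ↦ sqrt_log_div_le_mul_rpow hK hx.1 hx.2
  have hg : IntervalIntegrable (fun x : ℝ ↦ √(log K) * x ^ (-(1 / 2) : ℝ)) volume 0 1 :=
    (intervalIntegral.intervalIntegrable_rpow' (by norm_num)).const_mul _
  have hf : IntervalIntegrable (fun x : ℝ ↦ √(log (K / x))) volume 0 1 := by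
    have hf_meas : Measurable fun x : ℝ ↦ √(log (K / x)) :=
      (measurable_const.div measurable_id).log.sqrt
    refine hg.mono_fun' hf_meas.aestronglyMeasurable ?_
    rw [uIoc_of_le zero_le_one]
    filter_upwards [ae_restrict_mem measurableSet_Ioc] with x hx
    rw [norm_of_nonneg (sqrt_nonneg _)]
    exact h_bound x hx
  calc ∫ x in (0 : ℝ)..1, √(log (K / x))
      ≤ ∫ x in (0 : ℝ)..1, √(log K) * x ^ (-(1 / 2) : ℝ) := by
        refine intervalIntegral.integral_mono_on zero_le_one hf hg fun x hx ↦ ?_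
        rcases hx.1.eq_or_lt with rfl | hx₀
        · simp
        · exact h_bound x ⟨hx₀, hx.2⟩
    _ = 2 * √(log K) := by
      rw [intervalIntegral.integral_const_mul, integral_rpow_neg_half_zero_one, mul_comm]

theorem stmt_0_general (v K : ℝ) (hK : Real.exp 1 ≤ K) :
    ∫ ε in (0:ℝ)..1, Real.sqrt (v * Real.log (K / ε)) ≤ 2 * Real.sqrt (v * Real.log K) := by
  have hK₁ : 1 ≤ K := (one_le_exp zero_le_one).trans hK
  have hlogK : 1 ≤ log K := (le_log_iff_exp_le (by linarith)).2 hK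
  have h_split :
      ∫ ε in (0:ℝ)..1, √(v * log (K / ε)) = √v * ∫ ε in (0:ℝ)..1, √(log (K / ε)) := by
    rw [← intervalIntegral.integral_const_mul]
    refine intervalIntegral.integral_congr fun x hx ↦ ?_
    rw [uIcc_of_le zero_le_one] at hx
    exact sqrt_mul' v (log_div_nonneg_of_mem_Icc hK₁ hx)
  rw [h_split, sqrt_mul' v (zero_le_one.trans hlogK), mul_left_comm]
  exact mul_le_mul_of_nonneg_left (integral_sqrt_log_div_le hlogK) (sqrt_nonneg v)

theorem stmt_0 (v K : ℝ) (hv : 1 ≤ v) (hK : Real.exp 1 ≤ K) :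
    ∫ ε in (0:ℝ)..1, Real.sqrt (v * Real.log (K / ε)) ≤ 2 * Real.sqrt (v * Real.log K) :=
  stmt_0_general v K hK
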